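/- For any non-negative integer n, the double sum over i,j from 0 to n of (-4)^(i+j)*(i+j)*C(n,i)*C(n,j)/C(i+j,i) equals 16n*(-3)^(n-1) + (8n*4^n/C(2n,n)) * sum over k from 0 to n of C(2k,k)*(-3/4)^k. -/

import Mathlib

/-!
Both sides satisfy the first-order recurrence
`n (2n + 1) S (n + 1) = 2 (n + 1)² S n + 8 n (n + 1) (2n - 1) (-3)^(n + 1) / 9`
and agree at `n = 1`. For the closed form this is a computation with
`(n + 1) C(2n + 2, n + 1) = 2 (2n + 1) C(2n, n)`. For the double sum it is a Wilf–Zeilberger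
argument: the left side of the recurrence, taken termwise, is a forward difference in `i` of a
certificate `cert n i j` (found by the WZ method) plus the same difference with `i` and `j`
exchanged, so the sum over the square `i, j ≤ n + 1` telescopes to the edge `i = 0`. There the
certificate is a multiple of `(-4)^j C(n + 1, j)`, which sums to `(-3)^(n + 1)`.
-/

open Finset

section ChooseCast

variable {K : Type*} [Field K] [CharZero K]

theorem Nat.cast_choose_eq_mul_choose_succ (n k : ℕ) :
    (n.choose k : K) = (n + 1 - k) * (n + 1).choose k / (n + 1) := by
  rw [eq_div_iff (Nat.cast_add_one_ne_zero _)]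
  rcases le_or_gt k (n + 1) with h | h
  · rw [← Nat.cast_succ, ← Nat.cast_sub h]
    exact_mod_cast (Nat.choose_mul_succ_eq n k).trans (mul_comm _ _)
  · simp [Nat.choose_eq_zero_of_lt h, Nat.choose_eq_zero_of_lt (Nat.lt_of_succ_lt h)]

theorem Nat.cast_choose_succ_succ (n k : ℕ) :
    ((n + 1).choose (k + 1) : K) = (n + 1) * n.choose k / (k + 1) := by
  rw [eq_div_iff (Nat.cast_add_one_ne_zero _)]
  exact_mod_cast (Nat.add_one_mul_choose_eq n k).symm

theorem Nat.cast_choose_two_mul_succ (n : ℕ) :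
    ((2 * (n + 1)).choose (n + 1) : K) = 2 * (2 * n + 1) * (2 * n).choose n / (n + 1) := by
  rw [eq_div_iff (Nat.cast_add_one_ne_zero _)]
  exact_mod_cast (mul_comm _ _).trans (Nat.succ_mul_centralBinom_succ n)

end ChooseCast

theorem eq_of_forall_mul_succ_eq {R : Type*} [Semiring R] [IsLeftCancelMulZero R]
    {a b p q r : ℕ → R} {m : ℕ}
    (hp : ∀ n ≥ m, p n ≠ 0) (ha : ∀ n ≥ m, p n * a (n + 1) = q n * a n + r n)
    (hb : ∀ n ≥ m, p n * b (n + 1) = q n * b n + r n) (hm : a m = b m) :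
    ∀ n ≥ m, a n = b n := by
  intro n hn
  induction n, hn using Nat.le_induction with
  | base => exact hm
  | succ n hn ih =>
    apply mul_left_cancel₀ (hp n hn)
    rw [ha n hn, hb n hn, ih]

namespace DoubleBinomialSum

def summand (n i j : ℕ) : ℚ :=
  (-4 : ℚ) ^ (i + j) * (i + j) * (Nat.choose n i * Nat.choose n j) / Nat.choose (i + j) i

def doubleSum (n : ℕ) : ℚ :=
  ∑ i ∈ range (n + 1), ∑ j ∈ range (n + 1), summand n i j

def closedForm (n : ℕ) : ℚ :=
  16 * n * (-3 : ℚ) ^ (n - 1) +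
    8 * n * (4 : ℚ) ^ n / Nat.choose (2 * n) n *
      ∑ k ∈ range (n + 1), (Nat.choose (2 * k) k : ℚ) * (-3 / 4) ^ k

def certPoly (n i j : ℕ) : ℚ :=
  (-4 * n * (n + 1) * (2 * n - 1) * (1 + j)
    + i * (8 * n ^ 3 - 41 * n - 30) + i * j * (-8 * n ^ 2 - 71 * n - 48)
    + i * j ^ 2 * (48 - 42 * n) + 18 * i * j ^ 3
    + i ^ 2 * (8 * n ^ 2 + 29 * n + 24) + i ^ 2 * j * (36 + 36 * n) - 54 * i ^ 2 * j ^ 2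
    + (6 + 6 * n) * i ^ 3) / 9

def cert (n i j : ℕ) : ℚ :=
  certPoly n i j / (i + j + 1) *
    ((-4 : ℚ) ^ (i + j) * ((n + 1).choose i * (n + 1).choose j) / (i + j).choose i)

theorem summand_wz (n i j : ℕ) :
    n * (2 * n + 1) * summand (n + 1) i j - 2 * (n + 1) ^ 2 * summand n i j =
      (cert n (i + 1) j - cert n i j) + (cert n (j + 1) i - cert n j i) := by
  have hi : i + 1 + j = i + j + 1 := by omega
  have hj : j + 1 + i = i + j + 1 := by omega
  simp only [summand, cert, certPoly, hi, hj, add_comm j i, ← Nat.choose_symm_add, pow_succ,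
    Nat.cast_choose_succ_succ (K := ℚ), Nat.cast_choose_eq_mul_choose_succ (K := ℚ) n]
  push_cast
  field_simp
  ring

theorem sum_sum_range_symm_telescope {M : Type*} [AddCommGroup M] (G : ℕ → ℕ → M) (N : ℕ)
    (hG : ∀ j, G N j = 0) :
    ∑ i ∈ range N, ∑ j ∈ range N, ((G (i + 1) j - G i j) + (G (j + 1) i - G j i)) =
      -(2 • ∑ j ∈ range N, G 0 j) := by
  simp only [sum_add_distrib]
  rw [sum_comm, sum_congr rfl fun j _ => sum_range_sub (G · j) N]
  simp [hG, two_nsmul]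

theorem sum_range_pow_mul_choose {R : Type*} [CommSemiring R] (x : R) (m : ℕ) :
    ∑ j ∈ range (m + 1), x ^ j * m.choose j = (x + 1) ^ m := by
  simp [add_pow]

theorem cert_zero_left (n j : ℕ) :
    cert n 0 j = -4 * n * (n + 1) * (2 * n - 1) / 9 * ((-4) ^ j * (n + 1).choose j) := by
  simp only [cert, certPoly, Nat.choose_zero_right]
  push_cast
  field_simp
  ring

theorem cert_eq_zero_of_lt {n i : ℕ} (h : n + 1 < i) (j : ℕ) : cert n i j = 0 := by
  simp [cert, Nat.choose_eq_zero_of_lt h]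

theorem doubleSum_eq_sum_range_add_two (n : ℕ) :
    doubleSum n = ∑ i ∈ range (n + 2), ∑ j ∈ range (n + 2), summand n i j := by
  simp [doubleSum, sum_range_succ _ (n + 1), summand]

theorem doubleSum_recurrence (n : ℕ) :
    n * (2 * n + 1) * doubleSum (n + 1) =
      2 * (n + 1) ^ 2 * doubleSum n + 8 * n * (n + 1) * (2 * n - 1) / 9 * (-3) ^ (n + 1) := by
  have htele := sum_sum_range_symm_telescope (cert n) (n + 2)
    fun j => cert_eq_zero_of_lt (by omega) j
  simp only [← summand_wz, sum_sub_distrib, ← mul_sum, ← doubleSum_eq_sum_range_add_two,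
    cert_zero_left, sum_range_pow_mul_choose] at htele
  norm_num at htele
  rw [doubleSum]
  linear_combination htele

theorem closedForm_recurrence (n : ℕ) :
    n * (2 * n + 1) * closedForm (n + 1) =
      2 * (n + 1) ^ 2 * closedForm n + 8 * n * (n + 1) * (2 * n - 1) / 9 * (-3) ^ (n + 1) := by
  rcases n with _ | m
  · simp [closedForm]
  have hchoose : ((2 * (m + 1)).choose (m + 1) : ℚ) ≠ 0 :=
    Nat.cast_ne_zero.mpr (Nat.choose_pos (by omega)).ne'
  rw [closedForm, closedForm, sum_range_succ _ (m + 1 + 1),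
    Nat.cast_choose_two_mul_succ (K := ℚ) (m + 1)]
  simp only [Nat.add_sub_cancel, pow_succ, div_pow]
  push_cast
  field_simp
  ring

end DoubleBinomialSum

theorem stmt4 (n : ℕ) :
    ∑ i ∈ Finset.range (n + 1), ∑ j ∈ Finset.range (n + 1),
        (-4 : ℚ) ^ (i + j) * (i + j) * (Nat.choose n i * Nat.choose n j) / Nat.choose (i + j) i =
      16 * n * (-3 : ℚ) ^ (n - 1) +
        8 * n * (4 : ℚ) ^ n / Nat.choose (2 * n) n *
          ∑ k ∈ Finset.range (n + 1), (Nat.choose (2 * k) k : ℚ) * (-3 / 4) ^ k := by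
  open DoubleBinomialSum in
  change doubleSum n = closedForm n
  rcases Nat.eq_zero_or_pos n with rfl | hn
  · simp [doubleSum, closedForm, summand]
  refine eq_of_forall_mul_succ_eq (fun k hk => ?_) (fun k _ => doubleSum_recurrence k)
    (fun k _ => closedForm_recurrence k) ?_ n hn
  · positivity
  · norm_num [doubleSum, closedForm, summand, sum_range_succ]
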